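/- Let (A,[·,·],∘,α) be a super Hom-Gel'fand-Dorfman bialgebra and let f_λ be a 2-cocycle on the associated quadratic Hom-Lie conformal superalgebra whose restriction to A × A has the form f_λ(u,v) = Σ_{i=0}^{n} λ^i f_i(u,v) with bilinear maps f_i: A × A → ℂ, f_n ≠ 0, and n ≤ 3. Then for all homogeneous u,v,w ∈ A: (i) (−1)^{|u||v|} f₃(u∘v, α(w)) = f₃(α(u), w∘v) = f₃(v∘u, α(w)); (ii) f₃([v,u], α(w)) + (−1)^{|u||v|} f₂(u∘v, α(w)) = f₃(α(u), [w,v]) + f₂(α(u), w∘v); (iii) 3f₃([v,u], α(w)) − 2f₂(v∘u, α(w)) + (−1)^{|u||v|} f₂(u∘v, α(w)) = −(−1)^{|u||v|} f₂(α(v), w∘u + (−1)^{|u||w|} u∘w). -/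

import Mathlib

noncomputable section

/-- The sign `(-1)^{|x||y|}` attached to parities `i, j` in `ℤ₂`. -/
def sg (i j : ZMod 2) : ℂ := (-1 : ℂ) ^ (i.val * j.val)

variable {A : Type*} [AddCommGroup A] [Module ℂ A]

/-- `gr` makes `A` into a superspace: `A = A₀ ⊕ A₁`. -/
def IsSupergrading (gr : ZMod 2 → Submodule ℂ A) : Prop :=
  (∀ x : A, ∃ x0 ∈ gr 0, ∃ x1 ∈ gr 1, x = x0 + x1) ∧ (gr 0 ⊓ gr 1 = ⊥)

/-- An even linear map: it preserves the grading. -/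
def EvenLin (gr : ZMod 2 → Submodule ℂ A) (α : A →ₗ[ℂ] A) : Prop :=
  ∀ i : ZMod 2, ∀ x ∈ gr i, α x ∈ gr i

/-- An even bilinear map: it adds parities. -/
def EvenBilin (gr : ZMod 2 → Submodule ℂ A) (m : A →ₗ[ℂ] A →ₗ[ℂ] A) : Prop :=
  ∀ i j : ZMod 2, ∀ x ∈ gr i, ∀ y ∈ gr j, m x y ∈ gr (i + j)

/-- A Hom-Lie superalgebra structure on the superspace `(A, gr)`. -/
def HomLieSuper (gr : ZMod 2 → Submodule ℂ A) (br : A →ₗ[ℂ] A →ₗ[ℂ] A)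
    (α : A →ₗ[ℂ] A) : Prop :=
  EvenLin gr α ∧ EvenBilin gr br ∧
  (∀ (i j : ZMod 2), ∀ x ∈ gr i, ∀ y ∈ gr j, br x y = -(sg i j • br y x)) ∧
  (∀ (i j k : ZMod 2), ∀ x ∈ gr i, ∀ y ∈ gr j, ∀ z ∈ gr k,
    sg i k • br (br x y) (α z) + sg i j • br (br y z) (α x)
      + sg j k • br (br z x) (α y) = 0)

/-- A Hom-Novikov superalgebra structure on the superspace `(A, gr)`. -/
def HomNovikovSuper (gr : ZMod 2 → Submodule ℂ A) (c : A →ₗ[ℂ] A →ₗ[ℂ] A)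
    (α : A →ₗ[ℂ] A) : Prop :=
  EvenLin gr α ∧ EvenBilin gr c ∧
  (∀ (i j k : ZMod 2), ∀ x ∈ gr i, ∀ y ∈ gr j, ∀ z ∈ gr k,
    c (c x y) (α z) - c (α x) (c y z) = sg i j • (c (c y x) (α z) - c (α y) (c x z))) ∧
  (∀ (i j k : ZMod 2), ∀ x ∈ gr i, ∀ y ∈ gr j, ∀ z ∈ gr k,
    c (c x y) (α z) = sg j k • c (c x z) (α y))

/-- A super Hom-Gel'fand-Dorfman bialgebra structure on the superspace `(A, gr)`. -/
def SuperHomGD (gr : ZMod 2 → Submodule ℂ A) (br c : A →ₗ[ℂ] A →ₗ[ℂ] A)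
    (α : A →ₗ[ℂ] A) : Prop :=
  HomLieSuper gr br α ∧ HomNovikovSuper gr c α ∧
  (∀ (i j k : ZMod 2), ∀ x ∈ gr i, ∀ y ∈ gr j, ∀ z ∈ gr k,
    br (c x y) (α z) - sg j k • br (c x z) (α y) + c (br x y) (α z)
      - sg j k • c (br x z) (α y) - c (α x) (br y z) = 0)

/-- A Lie superalgebra structure on the superspace `(A, gr)`. -/
def LieSuper (gr : ZMod 2 → Submodule ℂ A) (br : A →ₗ[ℂ] A →ₗ[ℂ] A) : Prop :=
  EvenBilin gr br ∧
  (∀ (i j : ZMod 2), ∀ x ∈ gr i, ∀ y ∈ gr j, br x y = -(sg i j • br y x)) ∧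
  (∀ (i j k : ZMod 2), ∀ x ∈ gr i, ∀ y ∈ gr j, ∀ z ∈ gr k,
    sg i k • br (br x y) z + sg i j • br (br y z) x + sg j k • br (br z x) y = 0)

/-- A Novikov superalgebra structure on the superspace `(A, gr)`. -/
def NovikovSuper (gr : ZMod 2 → Submodule ℂ A) (c : A →ₗ[ℂ] A →ₗ[ℂ] A) : Prop :=
  EvenBilin gr c ∧
  (∀ (i j k : ZMod 2), ∀ x ∈ gr i, ∀ y ∈ gr j, ∀ z ∈ gr k,
    c (c x y) z - c x (c y z) = sg i j • (c (c y x) z - c y (c x z))) ∧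
  (∀ (i j k : ZMod 2), ∀ x ∈ gr i, ∀ y ∈ gr j, ∀ z ∈ gr k,
    c (c x y) z = sg j k • c (c x z) y)

/-- A super Gel'fand-Dorfman bialgebra structure on the superspace `(A, gr)`. -/
def SuperGD (gr : ZMod 2 → Submodule ℂ A) (br c : A →ₗ[ℂ] A →ₗ[ℂ] A) : Prop :=
  LieSuper gr br ∧ NovikovSuper gr c ∧
  (∀ (i j k : ZMod 2), ∀ x ∈ gr i, ∀ y ∈ gr j, ∀ z ∈ gr k,
    br (c x y) z - sg j k • br (c x z) y + c (br x y) z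
      - sg j k • c (br x z) y - c x (br y z) = 0)


/-- The grading induced on `σ →₀ A` by a grading of `A` (coefficientwise). -/
def grFinsupp {A : Type*} [AddCommGroup A] [Module ℂ A] (σ : Type*)
    (gr : ZMod 2 → Submodule ℂ A) (i : ZMod 2) : Submodule ℂ (σ →₀ A) where
  carrier := {f | ∀ s : σ, f s ∈ gr i}
  add_mem' := by
    intro f g hf hg s
    rw [Finsupp.add_apply]
    exact add_mem (hf s) (hg s)
  zero_mem' := by
    intro s
    rw [Finsupp.zero_apply]
    exact zero_mem _
  smul_mem' := by
    intro t f hf s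
    rw [Finsupp.smul_apply]
    exact Submodule.smul_mem _ t (hf s)

section Conformal

variable {M : Type*} [AddCommGroup M] [Module ℂ M]

/-- Multiplication by `λ` on `ℂ[λ] ⊗ M`, encoded as `ℕ →₀ M`. -/
def lmulV : (ℕ →₀ M) →ₗ[ℂ] (ℕ →₀ M) := Finsupp.lmapDomain M ℂ (· + 1)

/-- Coefficientwise action of `∂` on `ℂ[λ] ⊗ M`. -/
def dVmap (dM : M →ₗ[ℂ] M) : (ℕ →₀ M) →ₗ[ℂ] (ℕ →₀ M) :=
  Finsupp.mapRange.linearMap dM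

/-- The substitution `λ ↦ −λ−∂` on `ℂ[λ] ⊗ M`:
`λⁿ r ↦ (−λ−∂)ⁿ r = (−1)ⁿ ∑ₖ C(n,k) λᵏ ∂^{n−k} r`. -/
def negSubst (dM : M →ₗ[ℂ] M) (p : ℕ →₀ M) : ℕ →₀ M :=
  p.sum fun n r => ((-1 : ℂ) ^ n) •
    ∑ k ∈ Finset.range (n + 1),
      (n.choose k : ℂ) • Finsupp.single k ((⇑dM)^[n - k] r)

/-- A Hom-Lie conformal superalgebra structure on the `ℂ[∂]`-module `M` (with `∂`
acting via `dM`), graded by `grM`, with λ-bracket `B : M → M → ℂ[λ] ⊗ M` (values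
encoded as `ℕ →₀ M`, the `n`-th coefficient being that of `λⁿ`) and twisting map `αM`.
The Hom-Jacobi identity is stated in `ℂ[λ,μ] ⊗ M`, encoded as `(ℕ × ℕ) →₀ M`, the
`(n,m)` coefficient being that of `λⁿ μᵐ`. -/
def HomLieConformalSuper (grM : ZMod 2 → Submodule ℂ M) (dM : M →ₗ[ℂ] M)
    (B : M →ₗ[ℂ] M →ₗ[ℂ] (ℕ →₀ M)) (αM : M →ₗ[ℂ] M) : Prop :=
  -- `α∂ = ∂α`
  (∀ x : M, αM (dM x) = dM (αM x)) ∧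
  -- `αM` is even
  (∀ i : ZMod 2, ∀ x ∈ grM i, αM x ∈ grM i) ∧
  -- the bracket is even
  (∀ (i j : ZMod 2), ∀ x ∈ grM i, ∀ y ∈ grM j, ∀ n : ℕ, B x y n ∈ grM (i + j)) ∧
  -- conformal sesquilinearity
  (∀ x y : M, B (dM x) y = -(lmulV (B x y))) ∧
  (∀ x y : M, B x (dM y) = dVmap dM (B x y) + lmulV (B x y)) ∧
  -- skew-symmetry `[x_λ y] = −(−1)^{|x||y|}[y_{−λ−∂} x]`
  (∀ (i j : ZMod 2), ∀ x ∈ grM i, ∀ y ∈ grM j,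
    B x y = -(sg i j • negSubst dM (B y x))) ∧
  -- Hom-Jacobi identity
  (∀ (i j k : ZMod 2), ∀ x ∈ grM i, ∀ y ∈ grM j, ∀ z ∈ grM k,
    ((B y z).sum fun m r => (B (αM x) r).sum fun n s =>
        Finsupp.single ((n, m) : ℕ × ℕ) s)
    = ((B x y).sum fun n r => (B r (αM z)).sum fun m s =>
        ∑ t ∈ Finset.range (m + 1),
          (m.choose t : ℂ) • Finsupp.single ((n + t, m - t) : ℕ × ℕ) s)
      + sg i j • ((B x z).sum fun n r => (B (αM y) r).sum fun m s =>
          Finsupp.single ((n, m) : ℕ × ℕ) s))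

end Conformal

/-- The action of `∂` on `R = ℂ[∂] ⊗ A`, encoded as `ℕ →₀ A`. -/
def dR {A : Type*} [AddCommGroup A] [Module ℂ A] : (ℕ →₀ A) →ₗ[ℂ] (ℕ →₀ A) :=
  Finsupp.lmapDomain A ℂ (· + 1)

/-- The λ-bracket `[u_λ v] = [v,u] + (∂+λ)(v∘u) + (−1)^{|u||v|} λ (u∘v)` on
generators `u, v ∈ A` of parities with sign `s = (−1)^{|u||v|}`. -/
def genBr {A : Type*} [AddCommGroup A] [Module ℂ A]
    (br c : A →ₗ[ℂ] A →ₗ[ℂ] A) (s : ℂ) (u v : A) : ℕ →₀ (ℕ →₀ A) :=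
  Finsupp.single 0 (Finsupp.single 0 (br v u) + Finsupp.single 1 (c v u))
    + Finsupp.single 1 (Finsupp.single 0 (c v u + s • c u v))

/-- `B` is the λ-bracket of the quadratic conformal superalgebra associated to
`(A, [·,·], ∘)`: it takes the prescribed values on `A ⊗ A` and is extended by
`[f(∂)u_λ h(∂)v] = f(−λ)h(∂+λ)[u_λ v]`. -/
def AssocBracket {A : Type*} [AddCommGroup A] [Module ℂ A]
    (gr : ZMod 2 → Submodule ℂ A) (br c : A →ₗ[ℂ] A →ₗ[ℂ] A)
    (B : (ℕ →₀ A) →ₗ[ℂ] (ℕ →₀ A) →ₗ[ℂ] (ℕ →₀ (ℕ →₀ A))) : Prop :=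
  ∀ (p q : ℕ) (i j : ZMod 2), ∀ u ∈ gr i, ∀ v ∈ gr j,
    B (Finsupp.single p u) (Finsupp.single q v)
      = ((-1 : ℂ) ^ p) • ((⇑(lmulV (M := ℕ →₀ A)))^[p]
          ((fun x => dVmap (dR (A := A)) x + lmulV x)^[q]
            (genBr br c (sg i j) u v)))

section Cocycle

variable {M : Type*} [AddCommGroup M] [Module ℂ M]

/-- A 2-cocycle `f_λ : M × M → ℂ[λ]` on a Hom-Lie conformal superalgebra
`(M, grM, dM, B, αM)`.  The cocycle identity
`f_{λ+μ}([u_λ v], α(w)) = f_λ(α(u), [v_μ w]) − (−1)^{|u||v|} f_μ(α(v), [u_λ w])`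
is stated in `ℂ[λ,μ] = MvPolynomial (Fin 2) ℂ`, where `λ = X 0` and `μ = X 1`. -/
def IsCocycle (grM : ZMod 2 → Submodule ℂ M) (dM : M →ₗ[ℂ] M)
    (B : M →ₗ[ℂ] M →ₗ[ℂ] (ℕ →₀ M)) (αM : M →ₗ[ℂ] M)
    (cf : M →ₗ[ℂ] M →ₗ[ℂ] Polynomial ℂ) : Prop :=
  -- skew-symmetry `f_λ(u,v) = −(−1)^{|u||v|} f_{−λ}(v,u)` (note `∂ 𝔠 = 0`)
  (∀ (i j : ZMod 2), ∀ u ∈ grM i, ∀ v ∈ grM j,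
    cf u v = -(sg i j • (cf v u).comp (-Polynomial.X))) ∧
  -- conformal sesquilinearity `f_λ(∂u, v) = −λ f_λ(u,v) = −f_λ(u, ∂v)`
  (∀ u v : M, cf (dM u) v = -(Polynomial.X * cf u v)) ∧
  (∀ u v : M, cf u (dM v) = Polynomial.X * cf u v) ∧
  -- the cocycle identity
  (∀ (i j k : ZMod 2), ∀ u ∈ grM i, ∀ v ∈ grM j, ∀ w ∈ grM k,
    ((B u v).sum fun n r => (MvPolynomial.X 0 : MvPolynomial (Fin 2) ℂ) ^ n
        * Polynomial.aeval
            (MvPolynomial.X 0 + MvPolynomial.X 1 : MvPolynomial (Fin 2) ℂ)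
            (cf r (αM w)))
    = ((B v w).sum fun m s => (MvPolynomial.X 1 : MvPolynomial (Fin 2) ℂ) ^ m
        * Polynomial.aeval (MvPolynomial.X 0 : MvPolynomial (Fin 2) ℂ)
            (cf (αM u) s))
      - sg i j • ((B u w).sum fun n s =>
          (MvPolynomial.X 0 : MvPolynomial (Fin 2) ℂ) ^ n
            * Polynomial.aeval (MvPolynomial.X 1 : MvPolynomial (Fin 2) ℂ)
                (cf (αM v) s)))

end Cocycle


/-! On generators `u, v, w ∈ A` the cocycle identity, once the λ-brackets are expanded and
`∂` is moved out by sesquilinearity, becomes an identity in `ℂ[λ, μ]` between the polynomials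
`f_λ(x, y) = ∑ᵢ fᵢ(x, y) λⁱ` evaluated at `λ + μ`, at `λ` and at `μ`. As `f₄ = 0`, comparing the
coefficients of `λ⁴` and `λ²μ²` gives (i), that of `λ³` gives (ii) and that of `λμ²` gives (iii). -/

namespace MvPolynomial

variable {R : Type*} [CommSemiring R]

theorem coeff_aeval_X_zero_add_X_one (g : Polynomial R) (d : Fin 2 →₀ ℕ) :
    coeff d (Polynomial.aeval (X 0 + X 1 : MvPolynomial (Fin 2) R) g)
      = (d 0 + d 1).choose (d 0) * g.coeff (d 0 + d 1) := by
  induction g using Polynomial.induction_on' with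
  | add p q hp hq => simp only [map_add, coeff_add, hp, hq, Polynomial.coeff_add, mul_add]
  | monomial k a =>
    simp only [Polynomial.aeval_monomial, algebraMap_eq, coeff_C_mul, coeff_add_pow,
      Polynomial.coeff_monomial, Finset.HasAntidiagonal.mem_antidiagonal]
    by_cases h : d 0 + d 1 = k
    · subst h; simp [mul_comm]
    · simp [h, Ne.symm h]

theorem single_eq_iff_fin_two (d : Fin 2 →₀ ℕ) (i : Fin 2) (k : ℕ) :
    Finsupp.single i k = d ↔ d i = k ∧ d (1 - i) = 0 := by
  rw [Finsupp.ext_iff, Fin.forall_fin_two]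
  fin_cases i <;> simp [eq_comm, and_comm]

theorem coeff_aeval_X_fin_two (g : Polynomial R) (i : Fin 2) (d : Fin 2 →₀ ℕ) :
    coeff d (Polynomial.aeval (X i : MvPolynomial (Fin 2) R) g)
      = if d (1 - i) = 0 then g.coeff (d i) else 0 := by
  induction g using Polynomial.induction_on' with
  | add p q hp hq =>
    simp only [map_add, coeff_add, hp, hq, Polynomial.coeff_add]
    split_ifs <;> simp
  | monomial k a =>
    classical
    simp only [Polynomial.aeval_monomial, algebraMap_eq, coeff_C_mul, coeff_X_pow,
      single_eq_iff_fin_two, Polynomial.coeff_monomial]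
    by_cases h : d (1 - i) = 0 <;> by_cases h' : d i = k
    · simp [h, h']
    · simp [h, h', Ne.symm h']
    all_goals simp [h]

end MvPolynomial

theorem Polynomial.coeff_sum_range_C_mul_X_pow {R : Type*} [Semiring R] {n : ℕ} (a : ℕ → R)
    (ha : ∀ i, n < i → a i = 0) (k : ℕ) :
    (∑ i ∈ Finset.range (n + 1), C (a i) * X ^ i).coeff k = a k := by
  simp only [finsetSum_coeff, coeff_C_mul_X_pow, Finset.sum_ite_eq, Finset.mem_range]
  split_ifs with hk
  · rfl
  · exact (ha k (by omega)).symm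

theorem single_mem_grFinsupp {σ : Type*} {gr : ZMod 2 → Submodule ℂ A} {i : ZMod 2} {x : A}
    (hx : x ∈ gr i) (k : σ) : Finsupp.single k x ∈ grFinsupp σ gr i := by
  classical
  intro s
  rw [Finsupp.single_apply]
  split_ifs
  exacts [hx, zero_mem _]

theorem genBr_sum {P : Type*} [AddCommMonoid P] (br c : A →ₗ[ℂ] A →ₗ[ℂ] A) (s : ℂ) (u v : A)
    (g : ℕ → (ℕ →₀ A) → P) (h_zero : ∀ n, g n 0 = 0)
    (h_add : ∀ n x y, g n (x + y) = g n x + g n y) :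
    (genBr br c s u v).sum g
      = g 0 (Finsupp.single 0 (br v u) + Finsupp.single 1 (c v u))
        + g 1 (Finsupp.single 0 (c v u + s • c u v)) := by
  rw [genBr, Finsupp.sum_add_index' h_zero h_add, Finsupp.sum_single_index (h_zero 0),
    Finsupp.sum_single_index (h_zero 1)]

theorem AssocBracket.apply_single_zero {gr : ZMod 2 → Submodule ℂ A} {br c : A →ₗ[ℂ] A →ₗ[ℂ] A}
    {B : (ℕ →₀ A) →ₗ[ℂ] (ℕ →₀ A) →ₗ[ℂ] (ℕ →₀ (ℕ →₀ A))} (hB : AssocBracket gr br c B)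
    {i j : ZMod 2} {u v : A} (hu : u ∈ gr i) (hv : v ∈ gr j) :
    B (Finsupp.single 0 u) (Finsupp.single 0 v) = genBr br c (sg i j) u v := by
  simpa using hB 0 0 i j u hu v hv

theorem dR_single (k : ℕ) (x : A) : dR (Finsupp.single k x) = Finsupp.single (k + 1) x := by
  simp [dR, Finsupp.lmapDomain, Finsupp.mapDomain_single]

def restrictGen (cf : (ℕ →₀ A) →ₗ[ℂ] (ℕ →₀ A) →ₗ[ℂ] Polynomial ℂ) :
    A →ₗ[ℂ] A →ₗ[ℂ] Polynomial ℂ :=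
  cf.compl₁₂ (Finsupp.lsingle 0) (Finsupp.lsingle 0)

@[simp]
theorem restrictGen_apply (cf : (ℕ →₀ A) →ₗ[ℂ] (ℕ →₀ A) →ₗ[ℂ] Polynomial ℂ) (x y : A) :
    restrictGen cf x y = cf (Finsupp.single 0 x) (Finsupp.single 0 y) :=
  rfl

section RestrictGen

variable {grM : ZMod 2 → Submodule ℂ (ℕ →₀ A)}
  {B : (ℕ →₀ A) →ₗ[ℂ] (ℕ →₀ A) →ₗ[ℂ] (ℕ →₀ (ℕ →₀ A))} {αM : (ℕ →₀ A) →ₗ[ℂ] (ℕ →₀ A)}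
  {cf : (ℕ →₀ A) →ₗ[ℂ] (ℕ →₀ A) →ₗ[ℂ] Polynomial ℂ}

theorem IsCocycle.apply_add_single_one_left (hcoc : IsCocycle grM dR B αM cf) (x y z : A) :
    cf (Finsupp.single 0 x + Finsupp.single 1 y) (Finsupp.single 0 z)
      = restrictGen cf x z - Polynomial.X * restrictGen cf y z := by
  rw [map_add, LinearMap.add_apply, ← dR_single, hcoc.2.1, sub_eq_add_neg, restrictGen_apply,
    restrictGen_apply]

theorem IsCocycle.apply_add_single_one_right (hcoc : IsCocycle grM dR B αM cf) (x y z : A) :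
    cf (Finsupp.single 0 z) (Finsupp.single 0 x + Finsupp.single 1 y)
      = restrictGen cf z x + Polynomial.X * restrictGen cf z y := by
  rw [map_add, ← dR_single, hcoc.2.2.1, restrictGen_apply, restrictGen_apply]

end RestrictGen

open MvPolynomial in
theorem IsCocycle.restrictGen_identity {gr : ZMod 2 → Submodule ℂ A}
    {br c : A →ₗ[ℂ] A →ₗ[ℂ] A} {α : A →ₗ[ℂ] A}
    {B : (ℕ →₀ A) →ₗ[ℂ] (ℕ →₀ A) →ₗ[ℂ] (ℕ →₀ (ℕ →₀ A))}
    {cf : (ℕ →₀ A) →ₗ[ℂ] (ℕ →₀ A) →ₗ[ℂ] Polynomial ℂ} (hB : AssocBracket gr br c B)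
    (hcoc : IsCocycle (grFinsupp ℕ gr) dR B (Finsupp.mapRange.linearMap α) cf)
    {p q r : ZMod 2} {u v w : A} (hu : u ∈ gr p) (hv : v ∈ gr q) (hw : w ∈ gr r) :
    Polynomial.aeval (X 0 + X 1 : MvPolynomial (Fin 2) ℂ)
        (restrictGen cf (br v u) (α w) - Polynomial.X * restrictGen cf (c v u) (α w))
      + X 0 * Polynomial.aeval (X 0 + X 1) (restrictGen cf (c v u + sg p q • c u v) (α w))
    = Polynomial.aeval (X 0)
        (restrictGen cf (α u) (br w v) + Polynomial.X * restrictGen cf (α u) (c w v))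
      + X 1 * Polynomial.aeval (X 0) (restrictGen cf (α u) (c w v + sg q r • c v w))
      - sg p q • (Polynomial.aeval (X 1)
          (restrictGen cf (α v) (br w u) + Polynomial.X * restrictGen cf (α v) (c w u))
        + X 0 * Polynomial.aeval (X 1) (restrictGen cf (α v) (c w u + sg p r • c u w))) := by
  have h := hcoc.2.2.2 p q r _ (single_mem_grFinsupp hu 0) _ (single_mem_grFinsupp hv 0) _
    (single_mem_grFinsupp hw 0)
  simp only [hB.apply_single_zero hu hv, hB.apply_single_zero hv hw,
    hB.apply_single_zero hu hw, Finsupp.mapRange.linearMap_apply, Finsupp.mapRange_single] at h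
  rw [genBr_sum, genBr_sum, genBr_sum] at h
  · simp only [hcoc.apply_add_single_one_left, hcoc.apply_add_single_one_right, pow_zero,
      pow_one, one_mul] at h
    exact h
  all_goals simp [mul_add]

theorem cocycle_coeff_relations_top_general
    {A : Type*} [AddCommGroup A] [Module ℂ A]
    (gr : ZMod 2 → Submodule ℂ A)
    (br c : A →ₗ[ℂ] A →ₗ[ℂ] A) (α : A →ₗ[ℂ] A)
    (B : (ℕ →₀ A) →ₗ[ℂ] (ℕ →₀ A) →ₗ[ℂ] (ℕ →₀ (ℕ →₀ A)))
    (hB : AssocBracket gr br c B)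
    (cf : (ℕ →₀ A) →ₗ[ℂ] (ℕ →₀ A) →ₗ[ℂ] Polynomial ℂ)
    (hcoc : IsCocycle (grFinsupp ℕ gr) dR B (Finsupp.mapRange.linearMap α) cf)
    (n : ℕ) (f : ℕ → (A →ₗ[ℂ] A →ₗ[ℂ] ℂ))
    (hres : ∀ u v : A, cf (Finsupp.single 0 u) (Finsupp.single 0 v)
      = ∑ i ∈ Finset.range (n + 1), Polynomial.C (f i u v) * Polynomial.X ^ i)
    (hn : n ≤ 3) (hhigh : ∀ i : ℕ, n < i → f i = 0) :
    ∀ (p q r : ZMod 2), ∀ u ∈ gr p, ∀ v ∈ gr q, ∀ w ∈ gr r,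
      (sg p q * f 3 (c u v) (α w) = f 3 (α u) (c w v) ∧
        f 3 (α u) (c w v) = f 3 (c v u) (α w)) ∧
      (f 3 (br v u) (α w) + sg p q * f 2 (c u v) (α w)
        = f 3 (α u) (br w v) + f 2 (α u) (c w v)) ∧
      (3 * f 3 (br v u) (α w) - 2 * f 2 (c v u) (α w) + sg p q * f 2 (c u v) (α w)
        = -(sg p q * f 2 (α v) (c w u + sg p r • c u w))) := by
  intro p q r u hu v hv w hw
  have hcoeff : ∀ x y i, (restrictGen cf x y).coeff i = f i x y := fun x y i => by
    rw [restrictGen_apply, hres, Polynomial.coeff_sum_range_C_mul_X_pow (f · x y)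
      (fun i hi => by rw [hhigh i hi, LinearMap.zero_apply, LinearMap.zero_apply])]
  have hf4 : f 4 = 0 := hhigh 4 (by omega)
  have hid := hcoc.restrictGen_identity hB hu hv hw
  have coeff_at := fun a b =>
    congrArg (MvPolynomial.coeff (Finsupp.single 0 a + Finsupp.single 1 b)) hid
  have hL4 := coeff_at 4 0
  have hL2M2 := coeff_at 2 2
  have hL3 := coeff_at 3 0
  have hLM2 := coeff_at 1 2
  simp only [Fin.isValue, Finsupp.single_zero, add_zero, Polynomial.aeval_sub, map_add, map_smul,
    LinearMap.add_apply, LinearMap.smul_apply, MvPolynomial.coeff_add, MvPolynomial.coeff_sub,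
    MvPolynomial.coeff_aeval_X_zero_add_X_one, Finsupp.single_eq_same, ne_eq, one_ne_zero,
    not_false_eq_true, Finsupp.single_eq_of_ne, Nat.choose_self, Nat.cast_one, hcoeff, hf4,
    LinearMap.zero_apply, mul_zero, Polynomial.coeff_X_mul, one_mul, zero_sub,
    MvPolynomial.coeff_X_mul', OfNat.ofNat_ne_zero, Finsupp.support_single, Finset.mem_singleton,
    ↓reduceIte, Finsupp.coe_tsub, Pi.sub_apply, Nat.add_one_sub_one, tsub_self,
    MvPolynomial.coeff_smul, smul_eq_mul, neg_add_cancel_left, smul_add,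
    MvPolynomial.coeff_aeval_X_fin_two, sub_zero, zero_add, sub_self, Finsupp.coe_add, Pi.add_apply,
    zero_ne_one, Nat.reduceAdd, Nat.choose, Nat.cast_ofNat, Finsupp.mem_support_iff, tsub_zero,
    Nat.choose_one_right, add_tsub_cancel_left, Nat.choose_zero_right] at hL4 hL2M2 hL3 hLM2
  refine ⟨⟨?_, ?_⟩, ?_, ?_⟩
  · linear_combination hL4
  · linear_combination hL2M2 / 3 - hL4
  · linear_combination hL3
  · simp only [map_add, map_smul, smul_eq_mul]
    linear_combination hLM2

/-- Let `f_λ` be a 2-cocycle on the quadratic Hom-Lie conformal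
superalgebra associated to a super Hom-Gel'fand-Dorfman bialgebra
`(A, [·,·], ∘, α)`, with `f_λ(u,v) = ∑_{i=0}^{n} λ^i f_i(u,v)` on `A × A`, `f_n ≠ 0`,
`n ≤ 3` (and `f_i = 0` for `i > n`).  Then for all homogeneous `u, v, w ∈ A`:
(i) `(−1)^{|u||v|} f₃(u∘v, α(w)) = f₃(α(u), w∘v) = f₃(v∘u, α(w))`;
(ii) `f₃([v,u], α(w)) + (−1)^{|u||v|} f₂(u∘v, α(w)) = f₃(α(u), [w,v]) + f₂(α(u), w∘v)`;
(iii) `3f₃([v,u], α(w)) − 2f₂(v∘u, α(w)) + (−1)^{|u||v|} f₂(u∘v, α(w))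
      = −(−1)^{|u||v|} f₂(α(v), w∘u + (−1)^{|u||w|} u∘w)`. -/
theorem cocycle_coeff_relations_top
    {A : Type*} [AddCommGroup A] [Module ℂ A]
    (gr : ZMod 2 → Submodule ℂ A) (hgr : IsSupergrading gr)
    (br c : A →ₗ[ℂ] A →ₗ[ℂ] A) (α : A →ₗ[ℂ] A)
    (hGD : SuperHomGD gr br c α)
    (B : (ℕ →₀ A) →ₗ[ℂ] (ℕ →₀ A) →ₗ[ℂ] (ℕ →₀ (ℕ →₀ A)))
    (hB : AssocBracket gr br c B)
    (cf : (ℕ →₀ A) →ₗ[ℂ] (ℕ →₀ A) →ₗ[ℂ] Polynomial ℂ)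
    (hcoc : IsCocycle (grFinsupp ℕ gr) dR B (Finsupp.mapRange.linearMap α) cf)
    (n : ℕ) (f : ℕ → (A →ₗ[ℂ] A →ₗ[ℂ] ℂ))
    (hres : ∀ u v : A, cf (Finsupp.single 0 u) (Finsupp.single 0 v)
      = ∑ i ∈ Finset.range (n + 1), Polynomial.C (f i u v) * Polynomial.X ^ i)
    (hfn : f n ≠ 0) (hn : n ≤ 3) (hhigh : ∀ i : ℕ, n < i → f i = 0) :
    ∀ (p q r : ZMod 2), ∀ u ∈ gr p, ∀ v ∈ gr q, ∀ w ∈ gr r,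
      (sg p q * f 3 (c u v) (α w) = f 3 (α u) (c w v) ∧
        f 3 (α u) (c w v) = f 3 (c v u) (α w)) ∧
      (f 3 (br v u) (α w) + sg p q * f 2 (c u v) (α w)
        = f 3 (α u) (br w v) + f 2 (α u) (c w v)) ∧
      (3 * f 3 (br v u) (α w) - 2 * f 2 (c v u) (α w) + sg p q * f 2 (c u v) (α w)
        = -(sg p q * f 2 (α v) (c w u + sg p r • c u w))) :=
  cocycle_coeff_relations_top_general gr br c α B hB cf hcoc n f hres hn hhigh

end
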